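/- Proposition 2, case m_B ≥ μ_B (Eq. (15)): assume m_B ≥ μ_B ≥ 1 and N_A ≥ 1, and let F_B(x) = [F₁(x)]^{N_A} where F₁ is the κ-μ shadowed CDF with parameters (N_B·ȳ_B, κ_B, N_B·μ_B, N_B·m_B). Then at every x > 0, F_B has derivative f_B(x) = Σ_{k=1}^{N_A} (−1)^k·C(N_A,k)·Σ_{(s)∈ρ(k,ν_B)} (k!/(s₁!⋯s_{ν_B}!))·∏_{t=1}^{ν_B} [ (1/Δ₂ᴮ)^{ν_B−t}/(ν_B−t)!·Σ_{w=0}^{min(t−1,β_B)} Bᴮ_w ]^{s_t}·(e^{−kx/Δ₂ᴮ}/Δ₂ᴮ)·x^{S−1}·(Δ₂ᴮ·S − k·x), where S = Σ_{t=1}^{ν_B}(ν_B−t)s_t. -/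

import Mathlib

/- κ-μ shadowed parameters and mixture coefficients (case m ≥ μ). -/

noncomputable def Δ₂ (g κ : ℝ) (μ m : ℕ) : ℝ := ((μ * κ + m) / m) * g / (μ * (1 + κ))

noncomputable def Bco (κ : ℝ) (μ m j : ℕ) : ℝ :=
  (Nat.choose (m - μ) j : ℝ) * ((m : ℝ) / (μ * κ + m)) ^ j *
    ((μ * κ) / (μ * κ + m)) ^ (m - μ - j)

/-- The κ-μ shadowed CDF in the case `m ≥ μ`. -/
noncomputable def Fcdf2 (g κ : ℝ) (μ m : ℕ) (x : ℝ) : ℝ :=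
  1 - ∑ j ∈ Finset.range (m - μ + 1), Bco κ μ m j * Real.exp (-x / Δ₂ g κ μ m) *
        ∑ r ∈ Finset.range (m - j), (x / Δ₂ g κ μ m) ^ r / (Nat.factorial r : ℝ)

/-! Exchanging the two sums in the CDF gives `F₁(y) = 1 - e^{-y/Δ₂} P(y)` with `P` a polynomial
whose coefficient of `y^{ν-1-t}` is the bracket of Eq. (15). The binomial theorem in
`e^{-y/Δ₂} P(y)`, followed by the multinomial theorem for the powers of `P`, writes `F₁^{N_A}` as
`1` plus a finite combination of the functions `e^{-ky/Δ₂} y^S`, which are differentiated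
termwise. -/

open Finset Real
open scoped Nat

lemma one_sub_pow_eq_one_add_sum_Icc {R : Type*} [CommRing R] (a : R) (n : ℕ) :
    (1 - a) ^ n = 1 + ∑ k ∈ Icc 1 n, (-1) ^ k * (n.choose k : R) * a ^ k := by
  rw [sub_eq_add_neg, add_comm, add_pow, ← Nat.Ico_zero_eq_range,
    sum_eq_sum_Ico_succ_bot (by omega : 0 < n + 1), zero_add, Ico_add_one_right_eq_Icc]
  simp only [pow_zero, one_pow, mul_one, Nat.choose_zero_right, Nat.cast_one, neg_pow a]
  congr 1
  exact sum_congr rfl fun k _ => by ring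

lemma sum_pow_eq_sum_antidiagonalTuple {K : Type*} [Field K] [CharZero K] {ν : ℕ}
    (a : Fin ν → K) (k : ℕ) :
    (∑ t, a t) ^ k =
      ∑ s ∈ Nat.antidiagonalTuple ν k, ((k ! : K) / ∏ t, ((s t)! : K)) * ∏ t, a t ^ s t := by
  rw [← piAntidiag_univ_fin_eq_antidiagonalTuple, sum_pow_eq_sum_piAntidiag]
  refine sum_congr rfl fun s hs => ?_
  have hprod : ∏ t, ((s t)! : K) ≠ 0 :=
    prod_ne_zero_iff.mpr fun t _ => Nat.cast_ne_zero.mpr (Nat.factorial_ne_zero _)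
  rw [(mem_piAntidiag.mp hs).1.symm, ← Nat.multinomial_spec univ s, Nat.cast_mul, Nat.cast_prod,
    mul_div_cancel_left₀ _ hprod]

lemma sum_range_mul_sum_range_sub_eq_sum_fin {R : Type*} [CommSemiring R]
    (B a : ℕ → R) (L ν : ℕ) :
    ∑ j ∈ range (L + 1), B j * ∑ r ∈ range (ν - j), a r =
      ∑ t : Fin ν, (∑ w ∈ range (min (t : ℕ) L + 1), B w) * a (ν - 1 - t) := by
  calc ∑ j ∈ range (L + 1), B j * ∑ r ∈ range (ν - j), a r
      = ∑ r ∈ range ν, (∑ w ∈ range (min (ν - 1 - r) L + 1), B w) * a r := by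
        simp only [mul_sum, sum_mul]
        exact sum_comm' fun j r => by simp only [mem_range]; omega
    _ = _ := by
        rw [Fin.sum_univ_eq_sum_range (fun t => (∑ w ∈ range (min t L + 1), B w) * a (ν - 1 - t)),
          ← sum_range_reflect]
        refine sum_congr rfl fun r hr => ?_
        rw [show ν - 1 - (ν - 1 - r) = r by rw [mem_range] at hr; omega]

/-- The bracket of Eq. (15); `t` here is the paper's `t - 1`. -/
noncomputable def shadowedCoeff (g κ : ℝ) (μ m t : ℕ) : ℝ :=
  (1 / Δ₂ g κ μ m) ^ (m - 1 - t) / ((m - 1 - t)! : ℝ) *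
    ∑ w ∈ range (min t (m - μ) + 1), Bco κ μ m w

lemma Fcdf2_eq (g κ : ℝ) (μ m : ℕ) (y : ℝ) :
    Fcdf2 g κ μ m y =
      1 - exp (-y / Δ₂ g κ μ m) * ∑ t : Fin m, shadowedCoeff g κ μ m t * y ^ (m - 1 - t) := by
  simp only [Fcdf2, mul_assoc, mul_left_comm _ (exp _), ← mul_sum,
    sum_range_mul_sum_range_sub_eq_sum_fin]
  congr 2
  refine sum_congr rfl fun t _ => ?_
  rw [shadowedCoeff]
  ring

lemma Δ₂_pos {g κ : ℝ} {μ m : ℕ} (hg : 0 < g) (hκ : 0 ≤ κ) (hμ : 0 < μ) (hm : 0 < m) :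
    0 < Δ₂ g κ μ m := by
  unfold Δ₂
  positivity

lemma hasDerivAt_exp_mul_pow {Δ x : ℝ} (hΔ : Δ ≠ 0) (hx : x ≠ 0) (k : ℝ) (S : ℕ) :
    HasDerivAt (fun y => exp (-k * y / Δ) * y ^ S)
      (exp (-k * x / Δ) / Δ * x ^ ((S : ℤ) - 1) * (Δ * S - k * x)) x := by
  refine ((((hasDerivAt_id x).const_mul (-k)).div_const Δ).exp.mul
    (hasDerivAt_pow S x)).congr_deriv ?_
  rw [zpow_sub_one₀ hx, zpow_natCast, id]
  cases S with
  | zero => field_simp; ring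
  | succ S => rw [Nat.add_sub_cancel]; field_simp; ring

lemma exp_mul_sum_pow_eq {ν : ℕ} (Δ : ℝ) (c : Fin ν → ℝ) (e : Fin ν → ℕ) (k : ℕ) (y : ℝ) :
    (exp (-y / Δ) * ∑ t, c t * y ^ e t) ^ k =
      ∑ s ∈ Nat.antidiagonalTuple ν k, ((k ! : ℝ) / ∏ t, ((s t)! : ℝ)) * (∏ t, c t ^ s t) *
        (exp (-k * y / Δ) * y ^ (∑ t, e t * s t)) := by
  rw [mul_pow, sum_pow_eq_sum_antidiagonalTuple, mul_sum, ← exp_nat_mul]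
  refine sum_congr rfl fun s _ => ?_
  simp only [mul_pow, prod_mul_distrib, ← pow_mul, prod_pow_eq_pow_sum]
  ring_nf

theorem hasDerivAt_one_sub_exp_mul_sum_pow {ν : ℕ} {Δ x : ℝ} (hΔ : Δ ≠ 0) (hx : x ≠ 0)
    (c : Fin ν → ℝ) (e : Fin ν → ℕ) (n : ℕ) :
    HasDerivAt (fun y => (1 - exp (-y / Δ) * ∑ t, c t * y ^ e t) ^ n)
      (∑ k ∈ Icc 1 n, (-1) ^ k * (n.choose k : ℝ) *
        ∑ s ∈ Nat.antidiagonalTuple ν k, ((k ! : ℝ) / ∏ t, ((s t)! : ℝ)) * (∏ t, c t ^ s t) *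
          (exp (-k * x / Δ) / Δ) * x ^ (((∑ t, e t * s t : ℕ) : ℤ) - 1) *
          (Δ * (∑ t, e t * s t : ℕ) - k * x)) x := by
  simp only [one_sub_pow_eq_one_add_sum_Icc, exp_mul_sum_pow_eq]
  refine (HasDerivAt.const_add 1 (HasDerivAt.fun_sum fun (k : ℕ) _ => (HasDerivAt.fun_sum
    fun s _ => (hasDerivAt_exp_mul_pow hΔ hx (k : ℝ) _).const_mul _).const_mul _)).congr_deriv ?_
  simp only [mul_assoc]

open Finset in
theorem stmt5_general (yB κB : ℝ) (μB mB NB NA : ℕ)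
    (hyB : 0 < yB) (hκB : 0 < κB) (hμB : 1 ≤ μB) (hmB : μB ≤ mB)
    (hNB : 1 ≤ NB) :
    ∀ x : ℝ, 0 < x →
      HasDerivAt (fun y => (Fcdf2 (NB * yB) κB (NB * μB) (NB * mB) y) ^ NA)
        (∑ k ∈ Finset.Icc 1 NA, (-1 : ℝ) ^ k * (Nat.choose NA k : ℝ) *
          ∑ s ∈ Finset.Nat.antidiagonalTuple (NB * mB) k,
            ((Nat.factorial k : ℝ) / ∏ t, (Nat.factorial (s t) : ℝ)) *
            (∏ t : Fin (NB * mB),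
              ((1 / Δ₂ (NB * yB) κB (NB * μB) (NB * mB)) ^ (NB * mB - 1 - t.1) /
                  (Nat.factorial (NB * mB - 1 - t.1) : ℝ) *
                ∑ w ∈ Finset.range (min t.1 (NB * mB - NB * μB) + 1),
                  Bco κB (NB * μB) (NB * mB) w) ^ (s t)) *
            (Real.exp (-(k : ℝ) * x / Δ₂ (NB * yB) κB (NB * μB) (NB * mB)) /
              Δ₂ (NB * yB) κB (NB * μB) (NB * mB)) *
            x ^ (((∑ t : Fin (NB * mB), (NB * mB - 1 - t.1) * s t : ℕ) : ℤ) - 1) *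
            (Δ₂ (NB * yB) κB (NB * μB) (NB * mB) *
                ((∑ t : Fin (NB * mB), (NB * mB - 1 - t.1) * s t : ℕ) : ℝ)
              - (k : ℝ) * x))
        x := by
  intro x hx
  have hΔ : 0 < Δ₂ (NB * yB) κB (NB * μB) (NB * mB) :=
    Δ₂_pos (mul_pos (by exact_mod_cast hNB) hyB) hκB.le (Nat.mul_pos hNB hμB)
      (Nat.mul_pos hNB (hμB.trans hmB))
  simp only [Fcdf2_eq]
  exact hasDerivAt_one_sub_exp_mul_sum_pow hΔ.ne' hx.ne' _ (fun t => NB * mB - 1 - t) NA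

open Finset in
/-- Proposition 2, case `m_B ≥ μ_B` (Eq. (15)): the PDF of the TAS/MRC legitimate-link SNR,
i.e. the derivative of `[F₁(x)]^{N_A}`, where `F₁` is the Bob-side κ-μ shadowed CDF with
parameters `(N_B ȳ_B, κ_B, N_B μ_B, N_B m_B)`. -/
theorem stmt5 (yB κB : ℝ) (μB mB NB NA : ℕ)
    (hyB : 0 < yB) (hκB : 0 < κB) (hμB : 1 ≤ μB) (hmB : μB ≤ mB)
    (hNB : 1 ≤ NB) (hNA : 1 ≤ NA) :
    ∀ x : ℝ, 0 < x →
      HasDerivAt (fun y => (Fcdf2 (NB * yB) κB (NB * μB) (NB * mB) y) ^ NA)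
        (∑ k ∈ Finset.Icc 1 NA, (-1 : ℝ) ^ k * (Nat.choose NA k : ℝ) *
          ∑ s ∈ Finset.Nat.antidiagonalTuple (NB * mB) k,
            ((Nat.factorial k : ℝ) / ∏ t, (Nat.factorial (s t) : ℝ)) *
            (∏ t : Fin (NB * mB),
              ((1 / Δ₂ (NB * yB) κB (NB * μB) (NB * mB)) ^ (NB * mB - 1 - t.1) /
                  (Nat.factorial (NB * mB - 1 - t.1) : ℝ) *
                ∑ w ∈ Finset.range (min t.1 (NB * mB - NB * μB) + 1),
                  Bco κB (NB * μB) (NB * mB) w) ^ (s t)) *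
            (Real.exp (-(k : ℝ) * x / Δ₂ (NB * yB) κB (NB * μB) (NB * mB)) /
              Δ₂ (NB * yB) κB (NB * μB) (NB * mB)) *
            x ^ (((∑ t : Fin (NB * mB), (NB * mB - 1 - t.1) * s t : ℕ) : ℤ) - 1) *
            (Δ₂ (NB * yB) κB (NB * μB) (NB * mB) *
                ((∑ t : Fin (NB * mB), (NB * mB - 1 - t.1) * s t : ℕ) : ℝ)
              - (k : ℝ) * x))
        x :=
  stmt5_general yB κB μB mB NB NA hyB hκB hμB hmB hNB
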